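/- Fix b ∈ ℝ, set γ = 1 + (16/3)b, and let ω > 0. (1) If γ = 0 (i.e. b = −3/16) and −2√ω < c < 0, then ∫_ℝ Φ_{ω,c}(x)² dx = 4√(4ω − c²)/(−c). (2) If γ < 0 (i.e. b < −3/16), setting s_* = √(−γ/(1−γ)), then for −2√ω < c < −2 s_* √ω one has ∫_ℝ Φ_{ω,c}(x)² dx = (4/√(−γ))·log(α + √(α²−1)), where α = −c/√(c² + γ(4ω − c²)). -/

import Mathlib

/-
With k = √(4ω - c²), β = √(c² + γk²) and A = -c we have Φ² = 2k² / (A + β cosh (k x)), so after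
rescaling x the mass is 2k ∫ dt / (A + β cosh t). For γ = 0 we have β = A and the integrand is
1 / (A (1 + cosh t)), with antiderivative -2 / (A (eᵗ + 1)). For γ < 0 we have 0 < β < A; writing
A / β = cosh θ, the integrand is 1 / (β (cosh θ + cosh t)), with antiderivative
(log (eᵗ + e^{-θ}) - log (eᵗ + e^θ)) / (β sinh θ). Hence the mass is 4kθ / (β sinh θ), where
β sinh θ = √(A² - β²) = √(-γ) k, and log (α + √(α² - 1)) is `Real.arcosh α` with α = A / β = cosh θ.
-/

open MeasureTheory Real

/-- The (bright) soliton profile of the derivative NLS after gauge transformation. -/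
noncomputable def PhiB (γ ω c x : ℝ) : ℝ :=
  Real.sqrt (2 * (4 * ω - c ^ 2) /
    (Real.sqrt (c ^ 2 + γ * (4 * ω - c ^ 2)) * Real.cosh (Real.sqrt (4 * ω - c ^ 2) * x) - c))

open Filter Topology

lemma integrable_inv_add_cosh {A : ℝ} (hA : 0 ≤ A) :
    Integrable fun t : ℝ => (A + cosh t)⁻¹ := by
  refine (integrable_inv_one_add_sq.const_mul 4).mono' (by fun_prop) (ae_of_all _ fun t => ?_)
  have hcosh : 1 + t ^ 2 ≤ 4 * (A + cosh t) := by
    have := quadratic_le_exp_of_nonneg (abs_nonneg t)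
    nlinarith [exp_abs_le t, cosh_eq t, sq_abs t, abs_nonneg t]
  have hpos : 0 < A + cosh t := by positivity
  rw [norm_inv, norm_of_nonneg hpos.le, ← div_eq_mul_inv]
  rw [inv_le_comm₀ hpos (by positivity), inv_div, div_le_iff₀ (by norm_num)]
  linarith

lemma integral_inv_one_add_cosh : ∫ t : ℝ, (1 + cosh t)⁻¹ = 2 := by
  have hderiv (t : ℝ) : HasDerivAt (fun t => -2 * (exp t + 1)⁻¹) (1 + cosh t)⁻¹ t := by
    refine (((hasDerivAt_exp t).add_const 1).inv (by positivity)).const_mul (-2) |>.congr_deriv ?_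
    rw [cosh_eq, exp_neg]
    field_simp
    ring
  have hbot : Tendsto (fun t => -2 * (exp t + 1)⁻¹) atBot (𝓝 (-2)) := by
    simpa using ((tendsto_exp_atBot.add_const 1).inv₀ (by norm_num)).const_mul (-2 : ℝ)
  have htop : Tendsto (fun t => -2 * (exp t + 1)⁻¹) atTop (𝓝 0) := by
    simpa using (tendsto_atTop_add_const_right _ 1 tendsto_exp_atTop).inv_tendsto_atTop.const_mul
      (-2 : ℝ)
  rw [integral_of_hasDerivAt_of_tendsto hderiv (integrable_inv_add_cosh zero_le_one) hbot htop]
  norm_num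

lemma tendsto_log_exp_add_sub_self {a : ℝ} (ha : 0 ≤ a) :
    Tendsto (fun t => log (exp t + a) - t) atTop (𝓝 0) := by
  have h : Tendsto (fun t => log (1 + a * exp (-t))) atTop (𝓝 (log (1 + a * 0))) :=
    ((tendsto_exp_neg_atTop_nhds_zero.const_mul a).const_add 1).log (by norm_num)
  rw [mul_zero, add_zero, log_one] at h
  refine h.congr fun t => ?_
  have hfactor : exp t + a = exp t * (1 + a * exp (-t)) := by
    rw [exp_neg]; field_simp
  rw [hfactor, log_mul (exp_pos t).ne' (by positivity), log_exp]
  ring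

lemma integral_inv_cosh_add_cosh {θ : ℝ} (hθ : 0 < θ) :
    ∫ t : ℝ, (cosh θ + cosh t)⁻¹ = 2 * θ / sinh θ := by
  set F : ℝ → ℝ := fun t => (log (exp t + exp (-θ)) - log (exp t + exp θ)) / sinh θ
  have hderiv (t : ℝ) : HasDerivAt F (cosh θ + cosh t)⁻¹ t := by
    have hlog (a : ℝ) : HasDerivAt (fun t => log (exp t + exp a)) (exp t / (exp t + exp a)) t :=
      ((hasDerivAt_exp t).add_const (exp a)).log (by positivity)
    refine (((hlog (-θ)).sub (hlog θ)).div_const (sinh θ)).congr_deriv ?_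
    have hsinh : 2 * exp θ * sinh θ = exp θ ^ 2 - 1 := by
      rw [sinh_eq, exp_neg]; field_simp
    rw [cosh_eq, cosh_eq, exp_neg, exp_neg]
    field_simp
    linear_combination (-(exp t * (exp θ ^ 2 + 1) + exp θ * (exp t ^ 2 + 1))) * hsinh
  have hbot : Tendsto F atBot (𝓝 ((-θ - θ) / sinh θ)) := by
    have hlog (a : ℝ) : Tendsto (fun t => log (exp t + exp a)) atBot (𝓝 a) := by
      simpa using (tendsto_exp_atBot.add_const (exp a)).log (by simp)
    exact ((hlog (-θ)).sub (hlog θ)).div_const _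
  have htop : Tendsto F atTop (𝓝 ((0 - 0) / sinh θ)) := by
    refine ((tendsto_log_exp_add_sub_self (exp_pos (-θ)).le).sub
      (tendsto_log_exp_add_sub_self (exp_pos θ).le)).div_const _ |>.congr fun t => ?_
    simp only [F]
    ring
  rw [integral_of_hasDerivAt_of_tendsto hderiv (integrable_inv_add_cosh (cosh_pos θ).le) hbot htop]
  ring

lemma integral_inv_add_mul_cosh_self (A : ℝ) : ∫ t : ℝ, (A + A * cosh t)⁻¹ = 2 / A := by
  simp_rw [← mul_one_add, mul_inv, integral_const_mul, integral_inv_one_add_cosh, div_eq_inv_mul]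

lemma integral_inv_add_mul_cosh {A β : ℝ} (hβ : 0 < β) (hβA : β < A) :
    ∫ t : ℝ, (A + β * cosh t)⁻¹ = 2 * arcosh (A / β) / √(A ^ 2 - β ^ 2) := by
  have hα : 1 < A / β := (one_lt_div hβ).mpr hβA
  have hcosh : A = β * cosh (arcosh (A / β)) := by rw [cosh_arcosh hα.le]; field_simp
  have hsinh : √(A ^ 2 - β ^ 2) = β * sinh (arcosh (A / β)) := by
    have hfactor : A ^ 2 - β ^ 2 = β ^ 2 * ((A / β) ^ 2 - 1) := by field_simp
    rw [sinh_arcosh hα.le, hfactor, sqrt_mul (sq_nonneg β), sqrt_sq hβ.le]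
  conv_lhs => rw [hcosh]
  simp_rw [← mul_add, mul_inv, integral_const_mul, integral_inv_cosh_add_cosh (arcosh_pos hα),
    hsinh]
  field_simp

lemma PhiB_sq (γ ω x : ℝ) {c : ℝ} (hc : c ≤ 0) (hcω : c ^ 2 ≤ 4 * ω) :
    PhiB γ ω c x ^ 2 = 2 * (4 * ω - c ^ 2) *
      (-c + √(c ^ 2 + γ * (4 * ω - c ^ 2)) * cosh (√(4 * ω - c ^ 2) * x))⁻¹ := by
  have hden : 0 ≤ √(c ^ 2 + γ * (4 * ω - c ^ 2)) * cosh (√(4 * ω - c ^ 2) * x) - c := by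
    have := cosh_pos (√(4 * ω - c ^ 2) * x)
    have := sqrt_nonneg (c ^ 2 + γ * (4 * ω - c ^ 2))
    nlinarith
  rw [PhiB, sq_sqrt (div_nonneg (by linarith) hden), div_eq_mul_inv, neg_add_eq_sub]

lemma integral_PhiB_sq (γ ω : ℝ) {c : ℝ} (hc : c ≤ 0) (hcω : c ^ 2 ≤ 4 * ω) :
    ∫ x : ℝ, PhiB γ ω c x ^ 2 =
      2 * √(4 * ω - c ^ 2) * ∫ t : ℝ, (-c + √(c ^ 2 + γ * (4 * ω - c ^ 2)) * cosh t)⁻¹ := by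
  simp_rw [PhiB_sq γ ω _ hc hcω, integral_const_mul, Measure.integral_comp_mul_left
    (fun t => (-c + √(c ^ 2 + γ * (4 * ω - c ^ 2)) * cosh t)⁻¹), smul_eq_mul,
    abs_of_nonneg (inv_nonneg.mpr (sqrt_nonneg _))]
  rw [← mul_assoc, mul_assoc 2, ← div_eq_mul_inv, div_sqrt]

lemma integral_PhiB_sq_of_gamma_eq_zero (ω : ℝ) {c : ℝ} (hc : c ≤ 0) (hcω : c ^ 2 ≤ 4 * ω) :
    ∫ x : ℝ, PhiB 0 ω c x ^ 2 = 4 * √(4 * ω - c ^ 2) / (-c) := by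
  rw [integral_PhiB_sq 0 ω hc hcω, zero_mul, add_zero, sqrt_sq_eq_abs, abs_of_nonpos hc,
    integral_inv_add_mul_cosh_self]
  ring

lemma integral_PhiB_sq_of_gamma_neg {γ ω c : ℝ} (hγ : γ < 0) (hc : c < 0)
    (hcω : c ^ 2 < 4 * ω) (hβ : 0 < c ^ 2 + γ * (4 * ω - c ^ 2)) :
    ∫ x : ℝ, PhiB γ ω c x ^ 2 =
      4 / √(-γ) * arcosh (-c / √(c ^ 2 + γ * (4 * ω - c ^ 2))) := by
  have hk : 0 < √(4 * ω - c ^ 2) := sqrt_pos.mpr (by linarith)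
  have hβc : √(c ^ 2 + γ * (4 * ω - c ^ 2)) < -c := by
    rw [sqrt_lt' (by linarith)]
    nlinarith
  have hdisc : √((-c) ^ 2 - √(c ^ 2 + γ * (4 * ω - c ^ 2)) ^ 2) = √(-γ) * √(4 * ω - c ^ 2) := by
    rw [sq_sqrt hβ.le, ← sqrt_mul (by linarith)]
    ring_nf
  rw [integral_PhiB_sq γ ω hc.le hcω.le, integral_inv_add_mul_cosh (sqrt_pos.mpr hβ) hβc, hdisc]
  field_simp
  ring

lemma sq_lt_four_mul_of_neg_two_mul_sqrt_lt {r c : ℝ} (h : -2 * √r < c) (hc : c ≤ 0) :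
    c ^ 2 < 4 * r := by
  have h' : -c / 2 < √r := by linarith
  rw [lt_sqrt (by linarith)] at h'
  linarith

lemma four_mul_lt_sq_of_lt_neg_two_mul_sqrt {r c : ℝ} (h : c < -2 * √r) : 4 * r < c ^ 2 := by
  have h' : √r < -c / 2 := by linarith
  rw [sqrt_lt' (by linarith [sqrt_nonneg r])] at h'
  linarith

theorem stmt_5_general (b γ ω : ℝ) (hγ : γ = 1 + 16 / 3 * b) :
    (∀ c : ℝ, b = -3 / 16 → -2 * Real.sqrt ω < c → c < 0 →
      (∫ x : ℝ, (PhiB γ ω c x) ^ 2) = 4 * Real.sqrt (4 * ω - c ^ 2) / (-c)) ∧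
    (∀ c : ℝ, b < -3 / 16 → -2 * Real.sqrt ω < c →
      c < -2 * Real.sqrt (-γ / (1 - γ)) * Real.sqrt ω →
      (∫ x : ℝ, (PhiB γ ω c x) ^ 2) =
        4 / Real.sqrt (-γ) *
          Real.log (-c / Real.sqrt (c ^ 2 + γ * (4 * ω - c ^ 2)) +
            Real.sqrt ((-c / Real.sqrt (c ^ 2 + γ * (4 * ω - c ^ 2))) ^ 2 - 1))) := by
  constructor
  · rintro c hb hc_lo hc
    obtain rfl : γ = 0 := by rw [hγ, hb]; norm_num
    exact integral_PhiB_sq_of_gamma_eq_zero ω hc.le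
      (sq_lt_four_mul_of_neg_two_mul_sqrt_lt hc_lo hc.le).le
  · rintro c hb hc_lo hc_hi
    have hγ0 : γ < 0 := by rw [hγ]; linarith
    have hc : c < 0 :=
      hc_hi.trans_le (by nlinarith [sqrt_nonneg (-γ / (1 - γ)), sqrt_nonneg ω])
    have hβ : 0 < c ^ 2 + γ * (4 * ω - c ^ 2) := by
      rw [mul_assoc, ← sqrt_mul (div_nonneg (by linarith) (by linarith))] at hc_hi
      have h1γ : 0 < 1 - γ := by linarith
      have key := mul_lt_mul_of_pos_right (four_mul_lt_sq_of_lt_neg_two_mul_sqrt hc_hi) h1γ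
      rw [show 4 * (-γ / (1 - γ) * ω) * (1 - γ) = -4 * γ * ω by field_simp] at key
      linarith
    exact integral_PhiB_sq_of_gamma_neg hγ0 hc
      (sq_lt_four_mul_of_neg_two_mul_sqrt_lt hc_lo hc.le) hβ

/-- Mass of the solitons in the cases `γ = 0` (i.e. `b = -3/16`) and `γ < 0`
(i.e. `b < -3/16`). -/
theorem stmt_5 (b γ ω : ℝ) (hγ : γ = 1 + 16 / 3 * b) (hω : 0 < ω) :
    (∀ c : ℝ, b = -3 / 16 → -2 * Real.sqrt ω < c → c < 0 →
      (∫ x : ℝ, (PhiB γ ω c x) ^ 2) = 4 * Real.sqrt (4 * ω - c ^ 2) / (-c)) ∧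
    (∀ c : ℝ, b < -3 / 16 → -2 * Real.sqrt ω < c →
      c < -2 * Real.sqrt (-γ / (1 - γ)) * Real.sqrt ω →
      (∫ x : ℝ, (PhiB γ ω c x) ^ 2) =
        4 / Real.sqrt (-γ) *
          Real.log (-c / Real.sqrt (c ^ 2 + γ * (4 * ω - c ^ 2)) +
            Real.sqrt ((-c / Real.sqrt (c ^ 2 + γ * (4 * ω - c ^ 2))) ^ 2 - 1))) :=
  stmt_5_general b γ ω hγ
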